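/- The number of unordered pairs {T₁, T₂} where T₁ is an increasing tree rooted at 1 on a vertex set S ∪ {1} and T₂ is an increasing tree rooted at 2 on the complementary vertex set ({1,...,n} \ (S ∪ {1})) containing 2, summed over all subsets S of {3,...,n}, equals (n−1)!; equivalently, the sum over subsets S ⊆ {3,...,n} of (number of increasing trees on {1} ∪ S) × (number of increasing trees on {2} ∪ ({3,...,n} \ S)) equals (n−1)!. -/

import Mathlib

/-!
An increasing tree rooted at the minimum `r` is determined by its parent map `f`, which sends each
`v ≠ r` to its unique smaller neighbour; conversely, for any `f` with `f r = r` and `f v < v` for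
`v ≠ r`, the edges `{v, f v}` form an increasing tree rooted at `r`. So increasing trees on a
`k`-element linear order are counted by choosing `f v` among the elements below `v`, which gives
`1 · 2 ⋯ (k - 1) = (k - 1)!` trees. In the sum over `S ⊆ {3, …, n}` the term is then
`|S|! (n - 2 - |S|)!`, and `∑ₛ (n - 2).choose s · s! (n - 2 - s)! = (n - 1) (n - 2)! = (n - 1)!`.
-/

/-- The number of increasing trees on the vertex set `T ⊆ ℕ` rooted at `r`: trees such that
along the unique path from `r` to any vertex the labels strictly increase. -/
noncomputable def numIncTrees (T : Finset ℕ) (r : ℕ) : ℕ :=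
  Nat.card {G : SimpleGraph {x // x ∈ T} //
    G.IsTree ∧ ∀ (hr : r ∈ T) (v : {x // x ∈ T}) (p : G.Walk ⟨r, hr⟩ v), p.IsPath →
      List.Chain' (· < ·) (p.support.map (fun x => (x : ℕ)))}

open Finset Nat

namespace SimpleGraph

variable {V : Type*}

def parentGraph (f : V → V) : SimpleGraph V :=
  fromRel fun u v => f v = u

lemma parentGraph_adj {f : V → V} {u v : V} :
    (parentGraph f).Adj u v ↔ u ≠ v ∧ (f v = u ∨ f u = v) := by
  simp [parentGraph, eq_comm]

def IsIncreasingTree [LinearOrder V] (G : SimpleGraph V) (r : V) : Prop :=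
  G.IsTree ∧ ∀ v (p : G.Walk r v), p.IsPath → p.support.IsChain (· < ·)

variable [LinearOrder V] {f : V → V}

lemma apply_eq_of_parentGraph_adj (hf : ∀ v, f v ≤ v) {u v : V} (h : (parentGraph f).Adj u v)
    (huv : u < v) : f v = u := by
  rcases (parentGraph_adj.mp h).2 with h | h
  · exact h
  · exact absurd (h ▸ hf u) huv.not_ge

lemma isAcyclic_parentGraph (hf : ∀ v, f v ≤ v) : (parentGraph f).IsAcyclic := by
  classical
  intro x c hc
  obtain ⟨m, hm, hmax⟩ := c.support.toFinset.exists_max_image id ⟨x, by simp⟩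
  rw [List.mem_toFinset] at hm
  set d := c.rotate m hm
  have hd : d.IsCycle := hc.rotate hm
  -- both cycle neighbours of the largest vertex `m` are smaller, hence both equal `f m`
  have hparent : ∀ u, (parentGraph f).Adj u m → u ∈ d.support → f m = u := fun u hadj hu =>
    apply_eq_of_parentGraph_adj hf hadj <| (hmax u <| by
      simpa [d, Walk.mem_support_rotate_iff] using hu).lt_of_ne hadj.ne
  apply hd.snd_ne_penultimate
  rw [← hparent _ (d.adj_snd hd.not_nil).symm (d.getVert_mem_support 1),
    ← hparent _ (d.adj_penultimate hd.not_nil) (d.getVert_mem_support _)]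

end SimpleGraph

open SimpleGraph

def IsParentMap {V : Type*} [LinearOrder V] (r : V) (f : V → V) : Prop :=
  f r = r ∧ ∀ v, v ≠ r → f v < v

namespace IsParentMap

variable {V : Type*} [LinearOrder V] {f g : V → V} {r : V}

lemma apply_le (hf : IsParentMap r f) (v : V) : f v ≤ v := by
  by_cases hv : v = r
  · exact (hv ▸ hf.1).le
  · exact (hf.2 v hv).le

lemma reachable [WellFoundedLT V] (hf : IsParentMap r f) (v : V) :
    (parentGraph f).Reachable v r := by
  induction v using WellFoundedLT.induction with
  | ind v ih =>
    by_cases hv : v = r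
    · exact hv ▸ .refl v
    · have hadj : (parentGraph f).Adj v (f v) :=
        parentGraph_adj.mpr ⟨(hf.2 v hv).ne', .inr rfl⟩
      exact hadj.reachable.trans (ih _ (hf.2 v hv))

lemma isTree [Finite V] (hf : IsParentMap r f) : (parentGraph f).IsTree := by
  have : Nonempty V := ⟨r⟩
  exact ⟨.mk fun u v => (hf.reachable u).trans (hf.reachable v).symm,
    isAcyclic_parentGraph hf.apply_le⟩

lemma isChain_gt_support_of_isPath (hf : IsParentMap r f) {v : V} (p : (parentGraph f).Walk v r)
    (hp : p.IsPath) : p.support.IsChain (· > ·) := by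
  induction p with
  | nil => exact List.isChain_singleton _
  | @cons v w x h q ih =>
    rw [Walk.cons_isPath_iff] at hp
    have hq := ih hf hp.1
    suffices hwv : w < v by
      rw [Walk.support_cons, ← q.cons_tail_support, List.isChain_cons_cons, q.cons_tail_support]
      exact ⟨hwv, hq⟩
    -- a first step up to `w` makes `v = f w`, and the step after it goes back down to `f w`
    refine (lt_or_gt_of_ne h.ne).resolve_left fun hvw => ?_
    have hfw : f w = v := apply_eq_of_parentGraph_adj hf.apply_le h hvw
    cases q with
    | nil => exact hvw.ne (hfw ▸ hf.1)
    | @cons _ w' _ h' q' =>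
      rw [Walk.support_cons, ← q'.cons_tail_support, List.isChain_cons_cons] at hq
      have hfw' : f w = w' := apply_eq_of_parentGraph_adj hf.apply_le h'.symm hq.1
      exact hp.2 (by simp [← hfw, hfw'])

lemma isIncreasingTree [Finite V] (hf : IsParentMap r f) : (parentGraph f).IsIncreasingTree r := by
  refine ⟨hf.isTree, fun v p hp => ?_⟩
  simpa [Walk.support_reverse, List.isChain_reverse] using
    hf.isChain_gt_support_of_isPath p.reverse hp.reverse

lemma eq_of_parentGraph_eq (hf : IsParentMap r f) (hg : IsParentMap r g)
    (h : parentGraph f = parentGraph g) : f = g := by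
  funext v
  by_cases hv : v = r
  · rw [hv, hf.1, hg.1]
  · have hadj : (parentGraph g).Adj (f v) v := h ▸ parentGraph_adj.mpr ⟨(hf.2 v hv).ne, .inl rfl⟩
    exact (apply_eq_of_parentGraph_adj hg.apply_le hadj (hf.2 v hv)).symm

end IsParentMap

namespace SimpleGraph.IsIncreasingTree

variable {V : Type*} [LinearOrder V] {G : SimpleGraph V} {r : V}

lemma le_of_mem_support (hG : G.IsIncreasingTree r) {u : V} {p : G.Walk r u} (hp : p.IsPath)
    {x : V} (hx : x ∈ p.support) : x ≤ u :=
  (hG.2 u p hp).backwards_induction (· ≤ u) _ (fun _ _ hxy hy => hxy.le.trans hy)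
    (fun _ => p.getLast_support.le) x hx

lemma root_le (hG : G.IsIncreasingTree r) (v : V) : r ≤ v := by
  obtain ⟨p, hp⟩ := (hG.1.existsUnique_path r v).exists
  exact hG.le_of_mem_support hp p.start_mem_support

lemma existsUnique_lt_adj (hG : G.IsIncreasingTree r) {v : V} (hv : v ≠ r) :
    ∃! u, u < v ∧ G.Adj u v := by
  obtain ⟨q, hq⟩ := (hG.1.existsUnique_path r v).exists
  have hadj : G.Adj q.penultimate v := q.adj_penultimate (Walk.not_nil_of_ne hv.symm)
  refine ⟨q.penultimate,
    ⟨(hG.le_of_mem_support hq (q.getVert_mem_support _)).lt_of_ne hadj.ne, hadj⟩, ?_⟩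
  -- the increasing path to a smaller neighbour `u` avoids `v`, so extends to the path to `v`
  rintro u ⟨huv, hu⟩
  obtain ⟨p, hp⟩ := (hG.1.existsUnique_path r u).exists
  have hpath : (p.concat hu).IsPath :=
    hp.concat (fun hv' => (hG.le_of_mem_support hp hv').not_gt huv) hu
  rw [← (hG.1.existsUnique_path r v).unique hpath hq, Walk.penultimate_concat]

lemma exists_isParentMap (hG : G.IsIncreasingTree r) :
    ∃ f, IsParentMap r f ∧ parentGraph f = G := by
  classical
  choose! p hp using fun v (hv : v ≠ r) => (hG.existsUnique_lt_adj hv).exists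
  set f := Function.update p r r
  have hf : IsParentMap r f := ⟨by simp [f], fun v hv => by simpa [f, hv] using (hp v hv).1⟩
  have key : ∀ u v, u ≠ v → (f v = u ↔ u < v ∧ G.Adj u v) := by
    intro u v huv
    constructor
    · intro hvu
      have hv : v ≠ r := fun hv => huv (by rw [← hvu, hv, hf.1])
      obtain rfl : p v = u := by simpa [f, hv] using hvu
      exact hp v hv
    · rintro ⟨hlt, hadj⟩
      have hv : v ≠ r := ((hG.root_le u).trans_lt hlt).ne'
      simpa [f, hv] using (hG.existsUnique_lt_adj hv).unique (hp v hv) ⟨hlt, hadj⟩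
  refine ⟨f, hf, ?_⟩
  ext a b
  rw [parentGraph_adj]
  constructor
  · rintro ⟨hab, h | h⟩
    · exact ((key a b hab).1 h).2
    · exact ((key b a hab.symm).1 h).2.symm
  · intro h
    exact ⟨h.ne, (lt_or_gt_of_ne h.ne).imp (fun hlt => (key a b h.ne).2 ⟨hlt, h⟩)
      (fun hlt => (key b a h.ne.symm).2 ⟨hlt, h.symm⟩)⟩

end SimpleGraph.IsIncreasingTree

theorem card_isIncreasingTree_eq_card_isParentMap {V : Type*} [LinearOrder V] [Finite V] (r : V) :
    Nat.card {G : SimpleGraph V // G.IsIncreasingTree r} =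
      Nat.card {f : V → V // IsParentMap r f} := by
  refine (Nat.card_congr <| Equiv.ofBijective (fun f => ⟨parentGraph f.1, f.2.isIncreasingTree⟩)
    ⟨fun f g h => Subtype.ext (f.2.eq_of_parentGraph_eq g.2 (congrArg Subtype.val h)),
      fun G => ?_⟩).symm
  obtain ⟨f, hf, hfG⟩ := G.2.exists_isParentMap
  exact ⟨⟨f, hf⟩, Subtype.ext hfG⟩

section Counting

variable {V : Type*} [LinearOrder V] {r : V}

def parentMapEquiv (r : V) :
    {f : V → V // IsParentMap r f} ≃ ((v : {v // v ≠ r}) → {u // u < v.1}) where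
  toFun f v := ⟨f.1 v, f.2.2 v v.2⟩
  invFun g := ⟨fun v => if h : v = r then r else g ⟨v, h⟩, by simp,
    fun v hv => by simpa [hv] using (g ⟨v, hv⟩).2⟩
  left_inv f := by
    ext v
    by_cases hv : v = r <;> simp [hv, f.2.1]
  right_inv g := by
    ext v
    simp [v.2]

variable [Fintype V]

lemma prod_card_filter_lt_erase_eq_factorial (hr : ∀ v, r ≤ v) :
    ∏ v ∈ univ.erase r, #{u | u < v} = (Fintype.card V - 1)! := by
  set rank : V → ℕ := fun v => #{u | u < v}
  have hmono : StrictMono rank := fun u v huv =>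
    card_lt_card <| (ssubset_iff_of_subset fun x hx => by
      simp only [mem_filter, mem_univ, true_and] at hx ⊢; exact hx.trans huv).2
      ⟨u, by simp [huv], by simp⟩
  have hpos : 0 < Fintype.card V := Fintype.card_pos_iff.2 ⟨r⟩
  have himage : (univ.erase r).image rank = Ico 1 (Fintype.card V) := by
    refine eq_of_subset_of_card_le (fun i hi => ?_) ?_
    · obtain ⟨v, hv, rfl⟩ := mem_image.1 hi
      refine mem_Ico.2 ⟨card_pos.2 ⟨r, ?_⟩, card_lt_univ_of_notMem (x := v) (by simp)⟩
      simpa using (hr v).lt_of_ne (ne_of_mem_erase hv).symm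
    · rw [card_image_of_injective _ hmono.injective, card_erase_of_mem (mem_univ r),
        Nat.card_Ico, Finset.card_univ]
  calc ∏ v ∈ univ.erase r, rank v = ∏ i ∈ (univ.erase r).image rank, i :=
        (prod_image (f := id) hmono.injective.injOn).symm
    _ = ∏ i ∈ Ico 1 (Fintype.card V - 1 + 1), i := by rw [himage, Nat.sub_add_cancel hpos]
    _ = (Fintype.card V - 1)! := prod_Ico_id_eq_factorial _

lemma card_isParentMap (hr : ∀ v, r ≤ v) :
    Nat.card {f : V → V // IsParentMap r f} = (Fintype.card V - 1)! := by
  rw [Nat.card_congr (parentMapEquiv r), Nat.card_pi, ← prod_card_filter_lt_erase_eq_factorial hr,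
    prod_subtype (p := (· ≠ r)) (F := inferInstance) (univ.erase r) (by simp)]
  simp [Nat.card_eq_fintype_card, Fintype.card_subtype]

theorem card_isIncreasingTree (hr : ∀ v, r ≤ v) :
    Nat.card {G : SimpleGraph V // G.IsIncreasingTree r} = (Fintype.card V - 1)! := by
  rw [card_isIncreasingTree_eq_card_isParentMap, card_isParentMap hr]

end Counting

lemma numIncTrees_eq_factorial {T : Finset ℕ} {r : ℕ} (hr : r ∈ T) (hmin : ∀ x ∈ T, r ≤ x) :
    numIncTrees T r = (#T - 1)! := by
  rw [numIncTrees, ← Fintype.card_coe T,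
    ← card_isIncreasingTree (V := T) (r := ⟨r, hr⟩) fun v => hmin v v.2]
  -- the coercion in `numIncTrees` elaborates through the list monad, as `l >>= fun a => pure ↑a`
  have hchain (l : List {x // x ∈ T}) :
      (l.map (fun x => (x : ℕ))).IsChain (· < ·) ↔ l.IsChain (· < ·) := by
    simp only [List.pure_def, List.bind_eq_flatMap, List.flatMap_subtype,
      List.flatMap_singleton', List.map_id_fun', id_eq]
    exact List.isChain_map Subtype.val
  exact Nat.card_congr <| Equiv.subtypeEquivRight fun G => and_congr_right fun _ =>
    ⟨fun h v p hp => (hchain _).1 (h hr v p hp), fun h _ v p hp => (hchain _).2 (h v p hp)⟩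

lemma numIncTrees_insert_of_lt {S : Finset ℕ} {a : ℕ} (ha : ∀ x ∈ S, a < x) :
    numIncTrees (insert a S) a = (#S)! := by
  rw [numIncTrees_eq_factorial (mem_insert_self a S) (by simpa using fun x hx => (ha x hx).le),
    card_insert_of_notMem fun h => (ha a h).false, Nat.add_sub_cancel]

lemma sum_powerset_factorial_mul_factorial {α : Type*} (A : Finset α) :
    ∑ S ∈ A.powerset, (#S)! * (#A - #S)! = (#A + 1)! := by
  rw [sum_powerset_apply_card fun k => k ! * (#A - k)!]
  calc ∑ k ∈ range (#A + 1), (#A).choose k • (k ! * (#A - k)!) = ∑ k ∈ range (#A + 1), (#A)! :=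
        sum_congr rfl fun k hk => by
          rw [smul_eq_mul, ← mul_assoc, Nat.choose_mul_factorial_mul_factorial
            (Nat.lt_succ_iff.1 (mem_range.1 hk))]
    _ = (#A + 1)! := by rw [sum_const, card_range, smul_eq_mul, Nat.factorial_succ]

/-- the sum over subsets `S ⊆ {3,...,n}` of
(number of increasing trees rooted at 1 on `{1} ∪ S`) ×
(number of increasing trees rooted at 2 on `{2} ∪ ({3,...,n} \ S)`) equals `(n−1)!`. -/
theorem stmt_18 (n : ℕ) (hn : 2 ≤ n) :
    ∑ S ∈ (Finset.Icc 3 n).powerset,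
      numIncTrees (insert 1 S) 1 * numIncTrees (insert 2 (Finset.Icc 3 n \ S)) 2 =
    Nat.factorial (n - 1) := by
  have hterm : ∀ S ∈ (Icc 3 n).powerset, numIncTrees (insert 1 S) 1 *
      numIncTrees (insert 2 (Icc 3 n \ S)) 2 = (#S)! * (#(Icc 3 n) - #S)! := by
    intro S hS
    rw [mem_powerset] at hS
    rw [numIncTrees_insert_of_lt fun x hx => by grind,
      numIncTrees_insert_of_lt fun x hx => by grind, card_sdiff_of_subset hS]
  rw [sum_congr rfl hterm, sum_powerset_factorial_mul_factorial, Nat.card_Icc]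
  congr 1
  omega
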